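/- Let 𝔖 = {R_1, …, R_L} with L > 0 be a simple semi-Thue system over {0, 1, …, K}. For m > 0, let a_1, …, a_{m+1} ∈ {0, 1, …, K} and let M ∈ Q_m. If Γ_m ⊢ M : κ, S_G(M)[p_1 := G_1^0, …, p_m := G_m^0] =β π_1, and S_G(M)[p_1 := G_1^i, …, p_m := G_m^i] =β π_{a_i} for every i ∈ {1, …, m+1}, then the word a_1 … a_{m+1} rewrites in 𝔖 to the word 1^{m+1}, i.e. a_1 … a_{m+1} ⇒* 1^{m+1}. -/

import Mathlib

set_option maxHeartbeats 1000000

/-- Untyped λ-terms with de Bruijn indices. -/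
inductive Tm : Type
  | var : ℕ → Tm
  | app : Tm → Tm → Tm
  | lam : Tm → Tm
deriving DecidableEq

/-- Simple types over the single ground atom ι. -/
inductive Ty : Type
  | atom : Ty
  | arr : Ty → Ty → Ty
deriving DecidableEq

/-- Lift a renaming under a binder. -/
def upRen (ξ : ℕ → ℕ) : ℕ → ℕ
  | 0 => 0
  | n + 1 => ξ n + 1

/-- Renaming of de Bruijn variables. -/
def rename (ξ : ℕ → ℕ) : Tm → Tm
  | .var n => .var (ξ n)
  | .app s t => .app (rename ξ s) (rename ξ t)
  | .lam s => .lam (rename (upRen ξ) s)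

/-- Lift a substitution under a binder. -/
def up (σ : ℕ → Tm) : ℕ → Tm
  | 0 => .var 0
  | n + 1 => rename Nat.succ (σ n)

/-- Parallel (capture-avoiding) substitution. -/
def subst (σ : ℕ → Tm) : Tm → Tm
  | .var n => σ n
  | .app s t => .app (subst σ s) (subst σ t)
  | .lam s => .lam (subst (up σ) s)

/-- Cons a term onto a substitution. -/
def scons (N : Tm) (σ : ℕ → Tm) : ℕ → Tm
  | 0 => N
  | n + 1 => σ n

/-- Substitution of the topmost free variable: `M[x₀ := N]` (β-substitution). -/
def subst1 (N M : Tm) : Tm := subst (scons N Tm.var) M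

/-- β-reduction: contextual closure of `(λx.M) N →β M[x := N]`. -/
inductive Step : Tm → Tm → Prop
  | beta (s t : Tm) : Step (.app (.lam s) t) (subst1 t s)
  | appL {s s' : Tm} (t : Tm) : Step s s' → Step (.app s t) (.app s' t)
  | appR (s : Tm) {t t' : Tm} : Step t t' → Step (.app s t) (.app s t')
  | lam {s s' : Tm} : Step s s' → Step (.lam s) (.lam s')

/-- β-equivalence: reflexive, transitive, symmetric closure of β-reduction. -/
def Conv (M N : Tm) : Prop := Relation.EqvGen Step M N

/-- A term is in normal form if it admits no β-reduction step. -/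
def NormalTm (M : Tm) : Prop := ∀ N, ¬ Step M N

/-- Simple type system (de Bruijn contexts as lists, innermost binder first). -/
inductive Stlc : List Ty → Tm → Ty → Prop
  | var {Γ : List Ty} {x : ℕ} {t : Ty} : Γ[x]? = some t → Stlc Γ (.var x) t
  | app {Γ : List Ty} {M N : Tm} {s t : Ty} :
      Stlc Γ M (.arr s t) → Stlc Γ N s → Stlc Γ (.app M N) t
  | lam {Γ : List Ty} {M : Tm} {s t : Ty} :
      Stlc (s :: Γ) M t → Stlc Γ (.lam M) (.arr s t)

/-- The identity term `I = λx.x`. -/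
def Itm : Tm := .lam (.var 0)

/-- `n` nested λ-abstractions. -/
def lamN : ℕ → Tm → Tm
  | 0, M => M
  | n + 1, M => .lam (lamN n M)

/-- Iterated application `M N₁ … Nₖ`. -/
def appList (M : Tm) (l : List Tm) : Tm := l.foldl .app M

/-- `n`-fold arrow type `ι → … → ι → t`. -/
def arrN : ℕ → Ty → Ty
  | 0, t => t
  | n + 1, t => .arr .atom (arrN n t)

/-- A rewrite rule `ab ⇒ cd`, stored as `((a,b),(c,d))`; symbols are naturals. -/
abbrev SRule := (ℕ × ℕ) × (ℕ × ℕ)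

/-- One-step rewriting of a simple semi-Thue system given by a list of rules. -/
def SStep (Rs : List SRule) (u v : List ℕ) : Prop :=
  ∃ x y a b c d, ((a, b), (c, d)) ∈ Rs ∧ u = x ++ a :: b :: y ∧ v = x ++ c :: d :: y

/-- Many-step rewriting `⇒*`. -/
def SRew (Rs : List SRule) : List ℕ → List ℕ → Prop := Relation.ReflTransGen (SStep Rs)

/-! Extended alphabet `𝒜 = {0,…,K} ∪ {$, •, ⊤, ⊥}` of size `K+5`, encoded as
`0,…,K` for letters, `K+1` for `$`, `K+2` for `•`, `K+3` for `⊤`, `K+4` for `⊥`. -/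

/-- The simple type `κ` with `|𝒜| = K+5` argument positions. -/
def tyK (K : ℕ) : Ty := arrN (K + 5) .atom

/-- `κ → κ`, the type of `p_j`. -/
def tyP (K : ℕ) : Ty := .arr (tyK K) (tyK K)

/-- `(κ→κ) → κ → κ`, the type of `z_0` and of each `r_i`. -/
def tyZ0 (K : ℕ) : Ty := .arr (tyP K) (.arr (tyK K) (tyK K))

/-- `(κ→κ) → ((κ→κ) → κ) → κ`, the type of `z_⋆`. -/
def tyZstar (K : ℕ) : Ty := .arr (tyP K) (.arr (.arr (tyP K) (tyK K)) (tyK K))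

/-- The variable `s_i` under the `K+5` binders `λ s_0 … s_K s_$ s_• s_⊤ s_⊥`. -/
def sv (K i : ℕ) : Tm := .var (K + 4 - i)

/-- `case x of {…}`: the application `x N_0 N_1 … N_K N_$ N_• N_⊤ N_⊥`,
where the branch for symbol `i` is `f i`. -/
def caseOf (K : ℕ) (x : Tm) (f : ℕ → Tm) : Tm := appList x ((List.range (K + 5)).map f)

/-- The projection `π_i = λ s_0 … s_⊥ . s_i`. -/
def piTm (K i : ℕ) : Tm := lamN (K + 5) (sv K i)

/-- `δ_i = λx. λ s_0 … s_⊥ . case x of {⊤ ↦ s_i} else s_⊥`. -/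
def deltaTm (K i : ℕ) : Tm :=
  .lam (lamN (K + 5) (caseOf K (.var (K + 5))
    (fun j => if j = K + 3 then sv K i else sv K (K + 4))))

/-- `H_⋆ = λh.λg.λ s_0 … s_⊥ . case (g δ_•) of {$ ↦ s_$} else s_⊥`. -/
def Hstar (K : ℕ) : Tm :=
  .lam (.lam (lamN (K + 5) (caseOf K (.app (.var (K + 5)) (deltaTm K (K + 2)))
    (fun j => if j = K + 1 then sv K (K + 1) else sv K (K + 4)))))

/-- `H_0 = λh.λx.λ s_0 … s_⊥ . case x of {1 ↦ s_$} else s_⊥`. -/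
def H0 (K : ℕ) : Tm :=
  .lam (.lam (lamN (K + 5) (caseOf K (.var (K + 5))
    (fun j => if j = 1 then sv K (K + 1) else sv K (K + 4)))))

/-- `H_R = λh.λx.λ s_0 … s_⊥ . case (h π_⊤) of {• ↦ case x of {1 ↦ s_1} else s_⊥} else s_⊥`. -/
def HR (K : ℕ) : Tm :=
  .lam (.lam (lamN (K + 5) (caseOf K (.app (.var (K + 6)) (piTm K (K + 3)))
    (fun j => if j = K + 2 then
        caseOf K (.var (K + 5)) (fun j' => if j' = 1 then sv K 1 else sv K (K + 4))
      else sv K (K + 4)))))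

/-- `G_⋆` (word expansion). -/
def Gstar (K : ℕ) : Tm :=
  .lam (.lam (lamN (K + 5) (caseOf K (.app (.var (K + 6)) (piTm K (K + 3))) (fun j =>
    if j = K + 2 then
      caseOf K (.app (.var (K + 5)) (deltaTm K (K + 2))) (fun j1 =>
        if j1 = 0 then sv K 0
        else if j1 = K + 1 then
          caseOf K (.app (.var (K + 5)) (deltaTm K 0))
            (fun j2 => if j2 = 1 then sv K (K + 1) else sv K (K + 4))
        else sv K (K + 4))
    else if j = 0 then
      caseOf K (.app (.var (K + 5)) (deltaTm K 1))
        (fun j1 => if j1 = 0 then sv K 1 else sv K (K + 4))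
    else if j = 1 then
      caseOf K (.app (.var (K + 5)) (deltaTm K (K + 2)))
        (fun j1 => if j1 = 0 then sv K 0 else sv K (K + 4))
    else sv K (K + 4)))))

/-- `G_0` (initialization with 0s). -/
def G0 (K : ℕ) : Tm :=
  .lam (.lam (lamN (K + 5) (caseOf K (.app (.var (K + 6)) (piTm K (K + 3))) (fun j =>
    if j = K + 2 then
      caseOf K (.var (K + 5))
        (fun j1 => if j1 = 0 then sv K 0 else if j1 = 1 then sv K (K + 1) else sv K (K + 4))
    else if j = 0 then
      caseOf K (.var (K + 5)) (fun j1 => if j1 = 0 then sv K 1 else sv K (K + 4))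
    else if j = 1 then
      caseOf K (.var (K + 5)) (fun j1 => if j1 = 0 then sv K 0 else sv K (K + 4))
    else sv K (K + 4)))))

/-- `G_{ab⇒cd}` (rule application), for the rule `R = ((a,b),(c,d))`. -/
def Grule (K : ℕ) (R : SRule) : Tm :=
  .lam (.lam (lamN (K + 5) (caseOf K (.app (.var (K + 6)) (piTm K (K + 3))) (fun j =>
    if j = K + 2 then
      caseOf K (.var (K + 5)) (fun j1 => sv K j1)
    else if j = 0 then
      caseOf K (.var (K + 5)) (fun j1 => if j1 = R.2.2 then sv K R.1.2 else sv K (K + 4))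
    else if j = 1 then
      caseOf K (.var (K + 5)) (fun j1 => if j1 = R.2.1 then sv K R.1.1 else sv K (K + 4))
    else sv K (K + 4)))))

/-- `G_j^i`: `δ_1` if `i = j`, `δ_0` if `i = j+1`, `δ_•` otherwise. -/
def Gji (K i j : ℕ) : Tm :=
  if i = j then deltaTm K 1 else if i = j + 1 then deltaTm K 0 else deltaTm K (K + 2)

/-! De Bruijn convention for the free variables of terms in `Q_m`, `R_m`
(for a system with `L` rules): `p_j ↦ var (m - j)` (so `p_m ↦ var 0`, …, `p_1 ↦ var (m-1)`),
`z_⋆ ↦ var m`, `z_1 ↦ var (m+1)`, `z_0 ↦ var (m+2)`, `r_i ↦ var (m+3+L-i)`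
(so `r_L ↦ var (m+3)`, …, `r_1 ↦ var (m+2+L)`). -/

/-- The type environment `Γ_m` (as a de Bruijn context). -/
def GammaEnv (L K m : ℕ) : List Ty :=
  List.replicate m (tyP K) ++ tyZstar K :: tyK K :: tyZ0 K :: List.replicate L (tyZ0 K)

/-- The set `Q_m` of terms (for a system with `L` rules). -/
inductive Qset (L : ℕ) : ℕ → Tm → Prop
  | z1 (m : ℕ) : Qset L m (.var (m + 1))
  | rule (m i j : ℕ) (M : Tm) : 1 ≤ i → i ≤ L → 1 ≤ j → j ≤ m → Qset L m M →
      Qset L m (.app (.app (.var (m + 3 + L - i)) (.var (m - j))) M)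
  | ruleEta (m i j : ℕ) (M : Tm) : 1 ≤ i → i ≤ L → 1 ≤ j → j ≤ m → Qset L m M →
      Qset L m (.app (.app (.var (m + 3 + L - i)) (.lam (.app (.var (m - j + 1)) (.var 0)))) M)

/-- The set `R_m` of terms (for a system with `L` rules). -/
inductive Rset (L : ℕ) : ℕ → Tm → Prop
  | init (m : ℕ) (N M : Tm) : Qset L m M → Rset L m (.app (.app (.var (m + 2)) N) M)
  | expand (m : ℕ) (N M : Tm) : Rset L (m + 1) M → Rset L m (.app (.app (.var m) N) (.lam M))

/-- A simultaneous substitution on the free variables of terms in `Q_m`/`R_m`: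
`p_j ↦ P j`, `z_⋆ ↦ Xstar`, `z_1 ↦ X1`, `z_0 ↦ X0`, `r_i ↦ Xr i`; other variables fixed. -/
def mkSub (L m : ℕ) (P : ℕ → Tm) (Xstar X1 X0 : Tm) (Xr : ℕ → Tm) : ℕ → Tm := fun k =>
  if k < m then P (m - k)
  else if k = m then Xstar
  else if k = m + 1 then X1
  else if k = m + 2 then X0
  else if k < m + 3 + L then Xr (m + 3 + L - k)
  else .var k

/-- The substitution `S_F` combined with `[p_j := P j]`; the fixed free variable `u`
is taken to be `var 0` (in the resulting scope). -/
def SF (L m : ℕ) (P : ℕ → Tm) : ℕ → Tm :=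
  mkSub L m P (.lam (.lam (.app (.var 0) Itm))) (.var 0) (.lam Itm) (fun _ => Itm)

/-- The substitution `S_H` combined with `[p_j := P j]`. -/
def SH (L K m : ℕ) (P : ℕ → Tm) : ℕ → Tm :=
  mkSub L m P (Hstar K) (piTm K 1) (H0 K) (fun _ => HR K)

/-- The substitution `S_G` combined with `[p_j := P j]` (`r_i ↦ G_{R_i}`). -/
def SG (K : ℕ) (Rs : List SRule) (m : ℕ) (P : ℕ → Tm) : ℕ → Tm :=
  mkSub Rs.length m P (Gstar K) (piTm K 1) (G0 K)
    (fun i => Grule K (Rs.getD (i - 1) ((0, 0), (0, 0))))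

/-- The simple type `σ_𝔖 = Γ_1(r_1) → ⋯ → Γ_1(r_L) → Γ_1(z_0) → Γ_1(z_1) → Γ_1(z_⋆) → Γ_1(p_1) → κ`. -/
def sigmaTy (L K : ℕ) : Ty :=
  (List.replicate L (tyZ0 K) ++ [tyZ0 K, tyK K, tyZstar K, tyP K]).foldr .arr (tyK K)

/-! ### Substitution calculus -/

theorem rename_ext {ξ ζ : ℕ → ℕ} (M : Tm) (h : ∀ n, ξ n = ζ n) : rename ξ M = rename ζ M := by
  induction M generalizing ξ ζ with
  | var n => simp [rename, h]
  | app s t ihs iht => simp [rename, ihs h, iht h]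
  | lam s ih =>
    simp only [rename, Tm.lam.injEq]
    apply ih
    intro n; cases n with
    | zero => rfl
    | succ n => simp [upRen, h]

theorem subst_ext {σ τ : ℕ → Tm} (M : Tm) (h : ∀ n, σ n = τ n) : subst σ M = subst τ M := by
  induction M generalizing σ τ with
  | var n => simp [subst, h]
  | app s t ihs iht => simp [subst, ihs h, iht h]
  | lam s ih =>
    simp only [subst, Tm.lam.injEq]
    apply ih
    intro n; cases n with
    | zero => rfl
    | succ n => simp [up, h]

theorem rename_rename (ξ ζ : ℕ → ℕ) (M : Tm) :
    rename ξ (rename ζ M) = rename (fun n => ξ (ζ n)) M := by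
  induction M generalizing ξ ζ with
  | var n => rfl
  | app s t ihs iht => simp [rename, ihs, iht]
  | lam s ih =>
    simp only [rename, Tm.lam.injEq]
    rw [ih]
    apply rename_ext
    intro n; cases n with
    | zero => rfl
    | succ n => simp [upRen]

theorem subst_rename (σ : ℕ → Tm) (ξ : ℕ → ℕ) (M : Tm) :
    subst σ (rename ξ M) = subst (fun n => σ (ξ n)) M := by
  induction M generalizing σ ξ with
  | var n => rfl
  | app s t ihs iht => simp [rename, subst, ihs, iht]
  | lam s ih =>
    simp only [rename, subst, Tm.lam.injEq]
    rw [ih]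
    apply subst_ext
    intro n; cases n with
    | zero => rfl
    | succ n => simp [upRen, up]

theorem rename_subst (ξ : ℕ → ℕ) (σ : ℕ → Tm) (M : Tm) :
    rename ξ (subst σ M) = subst (fun n => rename ξ (σ n)) M := by
  induction M generalizing σ ξ with
  | var n => rfl
  | app s t ihs iht => simp [rename, subst, ihs, iht]
  | lam s ih =>
    simp only [rename, subst, Tm.lam.injEq]
    rw [ih]
    apply subst_ext
    intro n; cases n with
    | zero => rfl
    | succ n =>
      simp only [up, rename_rename]
      apply rename_ext
      intro k; simp [upRen]

theorem subst_subst (σ τ : ℕ → Tm) (M : Tm) :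
    subst σ (subst τ M) = subst (fun n => subst σ (τ n)) M := by
  induction M generalizing σ τ with
  | var n => rfl
  | app s t ihs iht => simp [subst, ihs, iht]
  | lam s ih =>
    simp only [subst, Tm.lam.injEq]
    rw [ih]
    apply subst_ext
    intro n; cases n with
    | zero => rfl
    | succ n =>
      simp only [up, subst_rename, rename_subst]

theorem rename_id (M : Tm) : rename (fun n => n) M = M := by
  induction M with
  | var n => rfl
  | app s t ihs iht => simp [rename, ihs, iht]
  | lam s ih =>
    simp only [rename, Tm.lam.injEq]
    rw [rename_ext (ζ := fun n => n)]
    · exact ih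
    · intro n; cases n <;> simp [upRen]

theorem subst_var_id (M : Tm) : subst Tm.var M = M := by
  induction M with
  | var n => rfl
  | app s t ihs iht => simp [subst, ihs, iht]
  | lam s ih =>
    simp only [subst, Tm.lam.injEq]
    rw [subst_ext (τ := Tm.var)]
    · exact ih
    · intro n; cases n <;> simp [up, rename]

theorem subst_subst1 (σ : ℕ → Tm) (N M : Tm) :
    subst σ (subst1 N M) = subst1 (subst σ N) (subst (up σ) M) := by
  simp only [subst1, subst_subst]
  apply subst_ext
  intro n; cases n with
  | zero => rfl
  | succ n =>
    simp only [scons, up, subst_rename]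
    exact (subst_var_id _).symm

theorem rename_subst1 (ξ : ℕ → ℕ) (N M : Tm) :
    rename ξ (subst1 N M) = subst1 (rename ξ N) (rename (upRen ξ) M) := by
  simp only [subst1, rename_subst, subst_rename]
  apply subst_ext
  intro n; cases n with
  | zero => rfl
  | succ n => simp [scons, upRen, rename]

theorem rename_as_subst (ξ : ℕ → ℕ) (M : Tm) : rename ξ M = subst (fun n => .var (ξ n)) M := by
  induction M generalizing ξ with
  | var n => rfl
  | app s t ihs iht => simp [rename, subst, ihs, iht]
  | lam s ih =>
    simp only [rename, subst, Tm.lam.injEq]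
    rw [ih]
    apply subst_ext
    intro n; cases n with
    | zero => rfl
    | succ n => simp [up, upRen, rename]
/-! ### Multi-step reduction -/

def Steps : Tm → Tm → Prop := Relation.ReflTransGen Step

theorem Steps.refl (M : Tm) : Steps M M := Relation.ReflTransGen.refl

theorem Steps.trans {M N P : Tm} (h1 : Steps M N) (h2 : Steps N P) : Steps M P :=
  Relation.ReflTransGen.trans h1 h2

theorem Steps.single {M N : Tm} (h : Step M N) : Steps M N := Relation.ReflTransGen.single h

theorem Steps.appL {s s' : Tm} (t : Tm) (h : Steps s s') : Steps (.app s t) (.app s' t) := by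
  induction h with
  | refl => exact Steps.refl _
  | tail _ h2 ih => exact ih.trans (Steps.single (Step.appL t h2))

theorem Steps.appR (s : Tm) {t t' : Tm} (h : Steps t t') : Steps (.app s t) (.app s t') := by
  induction h with
  | refl => exact Steps.refl _
  | tail _ h2 ih => exact ih.trans (Steps.single (Step.appR s h2))

theorem Steps.lam {s s' : Tm} (h : Steps s s') : Steps (.lam s) (.lam s') := by
  induction h with
  | refl => exact Steps.refl _
  | tail _ h2 ih => exact ih.trans (Steps.single (Step.lam h2))

theorem Steps.lamN {s s' : Tm} (n : ℕ) (h : Steps s s') : Steps (lamN n s) (lamN n s') := by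
  induction n with
  | zero => exact h
  | succ n ih => exact ih.lam

theorem Steps.appList {s s' : Tm} (l : List Tm) (h : Steps s s') :
    Steps (appList s l) (appList s' l) := by
  induction l generalizing s s' with
  | nil => exact h
  | cons A l ih => exact ih (h.appL A)

theorem Steps.conv {M N : Tm} (h : Steps M N) : Conv M N := by
  induction h with
  | refl => exact Relation.EqvGen.refl _
  | tail _ h2 ih => exact Relation.EqvGen.trans _ _ _ ih (Relation.EqvGen.rel _ _ h2)

/-! ### lamN, appList, upN -/

def upN : ℕ → (ℕ → Tm) → ℕ → Tm
  | 0, σ => σ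
  | n + 1, σ => up (upN n σ)

def upRenN : ℕ → (ℕ → ℕ) → ℕ → ℕ
  | 0, ξ => ξ
  | n + 1, ξ => upRen (upRenN n ξ)

theorem upN_up (n : ℕ) (σ : ℕ → Tm) : upN n (up σ) = up (upN n σ) := by
  induction n with
  | zero => rfl
  | succ n ih => simp [upN, ih]

theorem upRenN_upRen (n : ℕ) (ξ : ℕ → ℕ) : upRenN n (upRen ξ) = upRen (upRenN n ξ) := by
  induction n with
  | zero => rfl
  | succ n ih => simp [upRenN, ih]

theorem subst_lamN (σ : ℕ → Tm) (n : ℕ) (B : Tm) :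
    subst σ (lamN n B) = lamN n (subst (upN n σ) B) := by
  induction n generalizing σ with
  | zero => rfl
  | succ n ih => simp [lamN, subst, ih, upN_up, upN]

theorem rename_lamN (ξ : ℕ → ℕ) (n : ℕ) (B : Tm) :
    rename ξ (lamN n B) = lamN n (rename (upRenN n ξ) B) := by
  induction n generalizing ξ with
  | zero => rfl
  | succ n ih => simp [lamN, rename, ih, upRenN_upRen, upRenN]

theorem subst_appList (σ : ℕ → Tm) (M : Tm) (l : List Tm) :
    subst σ (appList M l) = appList (subst σ M) (l.map (subst σ)) := by
  induction l generalizing M with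
  | nil => rfl
  | cons A l ih => exact (ih (.app M A)).trans (by simp [appList, subst])

theorem upRenN_lt {n k : ℕ} (ξ : ℕ → ℕ) (h : k < n) : upRenN n ξ k = k := by
  induction n generalizing k with
  | zero => omega
  | succ n ih =>
    cases k with
    | zero => rfl
    | succ k => simp [upRenN, upRen, ih (show k < n by omega)]

theorem upN_scons_lt {n k : ℕ} (N : Tm) (h : k < n) :
    upN n (scons N Tm.var) k = .var k := by
  induction n generalizing k with
  | zero => omega
  | succ n ih =>
    cases k with
    | zero => rfl
    | succ k => simp [upN, up, ih (show k < n by omega), rename]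

theorem upN_scons_eq (n : ℕ) (N : Tm) :
    upN n (scons N Tm.var) n = rename (fun k => k + n) N := by
  induction n with
  | zero =>
    show N = rename (fun k => k + 0) N
    rw [rename_ext (ξ := fun k => k + 0) (ζ := fun n => n) N (fun k => rfl), rename_id]
  | succ n ih =>
    simp only [upN, up, ih, rename_rename]
    apply rename_ext; intro k; omega

theorem upN_scons_gt {n k : ℕ} (N : Tm) (h : n < k) :
    upN n (scons N Tm.var) k = .var (k - 1) := by
  induction n generalizing k with
  | zero =>
    cases k with
    | zero => omega
    | succ k => simp [upN, scons]
  | succ n ih =>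
    cases k with
    | zero => omega
    | succ k =>
      simp only [upN, up, ih (show n < k by omega), rename]
      congr 1; omega

/-! ### Bounded terms -/

def Bdd : ℕ → Tm → Prop
  | n, .var k => k < n
  | n, .app s t => Bdd n s ∧ Bdd n t
  | n, .lam s => Bdd (n + 1) s

theorem bdd_rename {n : ℕ} {M : Tm} {ξ : ℕ → ℕ} (h : Bdd n M) (hξ : ∀ k < n, ξ k = k) :
    rename ξ M = M := by
  induction M generalizing n ξ with
  | var k => simp [rename, hξ k h]
  | app s t ihs iht => exact congrArg₂ Tm.app (ihs h.1 hξ) (iht h.2 hξ)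
  | lam s ih =>
    simp only [rename, Tm.lam.injEq]
    apply ih (n := n + 1) h
    intro k hk
    cases k with
    | zero => rfl
    | succ k => simp [upRen, hξ k (by omega)]

theorem bdd_subst {n : ℕ} {M : Tm} {σ : ℕ → Tm} (h : Bdd n M) (hσ : ∀ k < n, σ k = .var k) :
    subst σ M = M := by
  induction M generalizing n σ with
  | var k => simp [subst, hσ k h]
  | app s t ihs iht => exact congrArg₂ Tm.app (ihs h.1 hσ) (iht h.2 hσ)
  | lam s ih =>
    simp only [subst, Tm.lam.injEq]
    apply ih (n := n + 1) h
    intro k hk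
    cases k with
    | zero => rfl
    | succ k => simp [up, hσ k (by omega), rename]

theorem bdd_lamN {n m : ℕ} {B : Tm} (h : Bdd (n + m) B) : Bdd n (lamN m B) := by
  induction m generalizing n with
  | zero => exact h
  | succ m ih =>
    show Bdd (n + 1) (lamN m B)
    exact ih (by rw [show n + 1 + m = n + (m + 1) by omega]; exact h)

theorem bdd_appList {n : ℕ} {M : Tm} {l : List Tm} (h : Bdd n M) (hl : ∀ A ∈ l, Bdd n A) :
    Bdd n (appList M l) := by
  induction l generalizing M with
  | nil => exact h
  | cons A l ih =>
    exact ih ⟨h, hl A List.mem_cons_self⟩ (fun B hB => hl B (List.mem_cons_of_mem _ hB))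
/-! ### Parallel reduction and confluence -/

inductive Par : Tm → Tm → Prop
  | var (n : ℕ) : Par (.var n) (.var n)
  | app {s s' t t' : Tm} : Par s s' → Par t t' → Par (.app s t) (.app s' t')
  | lam {s s' : Tm} : Par s s' → Par (.lam s) (.lam s')
  | beta {s s' t t' : Tm} : Par s s' → Par t t' → Par (.app (.lam s) t) (subst1 t' s')

theorem Par.refl (M : Tm) : Par M M := by
  induction M with
  | var n => exact Par.var n
  | app s t ihs iht => exact Par.app ihs iht
  | lam s ih => exact Par.lam ih

theorem par_of_step {M N : Tm} (h : Step M N) : Par M N := by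
  induction h with
  | beta s t => exact Par.beta (Par.refl s) (Par.refl t)
  | appL t _ ih => exact Par.app ih (Par.refl t)
  | appR s _ ih => exact Par.app (Par.refl s) ih
  | lam _ ih => exact Par.lam ih

theorem steps_of_par {M N : Tm} (h : Par M N) : Steps M N := by
  induction h with
  | var n => exact Steps.refl _
  | app _ _ ihs iht => exact (ihs.appL _).trans (Steps.appR _ iht)
  | lam _ ih => exact ih.lam
  | @beta s s' t t' _ _ ihs iht =>
    exact ((ihs.lam.appL t).trans (Steps.appR _ iht)).trans (Steps.single (Step.beta s' t'))

theorem par_rename {M N : Tm} (ξ : ℕ → ℕ) (h : Par M N) : Par (rename ξ M) (rename ξ N) := by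
  induction h generalizing ξ with
  | var n => exact Par.var _
  | app _ _ ihs iht => exact Par.app (ihs ξ) (iht ξ)
  | lam _ ih => exact Par.lam (ih (upRen ξ))
  | @beta s s' t t' _ _ ihs iht =>
    rw [rename_subst1]
    exact Par.beta (ihs (upRen ξ)) (iht ξ)

theorem par_subst {M N : Tm} {σ τ : ℕ → Tm} (hστ : ∀ k, Par (σ k) (τ k)) (h : Par M N) :
    Par (subst σ M) (subst τ N) := by
  induction h generalizing σ τ with
  | var n => exact hστ n
  | app _ _ ihs iht => exact Par.app (ihs hστ) (iht hστ)
  | lam _ ih =>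
    refine Par.lam (ih ?_)
    intro k; cases k with
    | zero => exact Par.refl _
    | succ k => exact par_rename _ (hστ k)
  | @beta s s' t t' _ _ ihs iht =>
    rw [subst_subst1]
    refine Par.beta (ihs ?_) (iht hστ)
    intro k; cases k with
    | zero => exact Par.refl _
    | succ k => exact par_rename _ (hστ k)

theorem par_subst1 {A A' B B' : Tm} (hA : Par A A') (hB : Par B B') :
    Par (subst1 B A) (subst1 B' A') := by
  apply par_subst _ hA
  intro k; cases k with
  | zero => exact hB
  | succ k => exact Par.refl _

/-- Complete development. -/
def cd : Tm → Tm
  | .var n => .var n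
  | .app (.lam s) t => subst1 (cd t) (cd s)
  | .app (.var n) t => .app (.var n) (cd t)
  | .app (.app s1 s2) t => .app (cd (.app s1 s2)) (cd t)
  | .lam s => .lam (cd s)

theorem par_lam_inv {s u : Tm} (h : Par (.lam s) u) : ∃ s', u = .lam s' ∧ Par s s' := by
  cases h with
  | lam hs => exact ⟨_, rfl, hs⟩

theorem par_cd {M N : Tm} (h : Par M N) : Par N (cd M) := by
  induction h with
  | var n => exact Par.var n
  | lam _ ih => exact Par.lam ih
  | @beta s s' t t' _ _ ihs iht => exact par_subst1 ihs iht
  | @app s s' t t' hs ht ihs iht =>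
    cases s with
    | var n =>
      cases hs with
      | var => exact Par.app ihs iht
    | app s1 s2 => exact Par.app ihs iht
    | lam s0 =>
      obtain ⟨s0', rfl, hs0⟩ := par_lam_inv hs
      obtain ⟨c, hc, hpc⟩ := par_lam_inv ihs
      have hceq : c = cd s0 := (Tm.lam.inj (show Tm.lam (cd s0) = Tm.lam c from hc)).symm
      rw [show cd (.app (.lam s0) t) = subst1 (cd t) (cd s0) from rfl]
      exact Par.beta (hceq ▸ hpc) iht

theorem par_diamond {M N1 N2 : Tm} (h1 : Par M N1) (h2 : Par M N2) :
    ∃ Z, Par N1 Z ∧ Par N2 Z := ⟨cd M, par_cd h1, par_cd h2⟩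

theorem steps_of_parSteps {M N : Tm} (h : Relation.ReflTransGen Par M N) : Steps M N := by
  induction h with
  | refl => exact Steps.refl _
  | tail _ h2 ih => exact ih.trans (steps_of_par h2)

theorem conv_common {M N : Tm} (h : Conv M N) : ∃ Z, Steps M Z ∧ Steps N Z := by
  have hpar : Relation.EqvGen Par M N := Relation.EqvGen.mono (fun _ _ => par_of_step) _ _ h
  have hjoin : Relation.Join (Relation.ReflTransGen Par) M N := by
    have hequiv := Relation.equivalence_join_reflTransGen
      (r := Par) (fun a b c hab hac => by
        obtain ⟨d, h1, h2⟩ := par_diamond hab hac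
        exact ⟨d, Relation.ReflGen.single h1, Relation.ReflTransGen.single h2⟩)
    exact (Equivalence.eqvGen_iff hequiv).mp
      (Relation.EqvGen.mono (fun a b hab => ⟨b, Relation.ReflTransGen.single hab,
        Relation.ReflTransGen.refl⟩) _ _ hpar)
  obtain ⟨Z, h1, h2⟩ := hjoin
  exact ⟨Z, steps_of_parSteps h1, steps_of_parSteps h2⟩
/-! ### Normal forms and piTm facts -/

theorem no_step_lamN_var (n j : ℕ) {Z : Tm} (h : Step (lamN n (.var j)) Z) : False := by
  induction n generalizing Z with
  | zero => cases h
  | succ n ih => cases h with | lam h' => exact ih h'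

theorem steps_pi_eq {K t : ℕ} {Z : Tm} (h : Steps (piTm K t) Z) : Z = piTm K t := by
  induction h with
  | refl => rfl
  | tail h1 h2 ih => exact absurd (ih ▸ h2) (fun hc => no_step_lamN_var _ _ hc)

theorem lamN_inj {n : ℕ} {A B : Tm} (h : lamN n A = lamN n B) : A = B := by
  induction n with
  | zero => exact h
  | succ n ih => exact ih (Tm.lam.inj h)

theorem piTm_inj {K x y : ℕ} (hx : x ≤ K + 4) (hy : y ≤ K + 4) (h : piTm K x = piTm K y) :
    x = y := by
  have := Tm.var.inj (lamN_inj (n := K + 5) h)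
  omega

theorem conv_pi_unique {K x y : ℕ} {T : Tm} (hconv : Conv T (piTm K x))
    (hred : Steps T (piTm K y)) (hx : x ≤ K + 4) (hy : y ≤ K + 4) : y = x := by
  have h1 : Conv T (piTm K y) := hred.conv
  have h2 : Conv (piTm K y) (piTm K x) :=
    Relation.EqvGen.trans _ _ _ (Relation.EqvGen.symm _ _ h1) hconv
  obtain ⟨Z, hZ1, hZ2⟩ := conv_common h2
  have e1 := steps_pi_eq hZ1
  have e2 := steps_pi_eq hZ2
  exact piTm_inj hy hx (e1 ▸ e2)

theorem bdd_sv (K i n : ℕ) (h : K + 5 ≤ n) : Bdd n (sv K i) := by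
  show K + 4 - i < n; omega

theorem bdd_piTm (K t n : ℕ) : Bdd n (piTm K t) := by
  apply bdd_lamN
  show K + 4 - t < n + (K + 5); omega

theorem rename_piTm (ξ : ℕ → ℕ) (K t : ℕ) : rename ξ (piTm K t) = piTm K t :=
  bdd_rename (bdd_piTm K t 0) (by omega)

theorem subst_piTm (σ : ℕ → Tm) (K t : ℕ) : subst σ (piTm K t) = piTm K t :=
  bdd_subst (bdd_piTm K t 0) (by omega)

/-! ### β-computation: applying lamN to a list -/

theorem step_lamN_var_lt {n j : ℕ} (N : Tm) (h : j < n) :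
    Step (.app (lamN (n + 1) (.var j)) N) (lamN n (.var j)) := by
  have hb := Step.beta (lamN n (.var j)) N
  rwa [show subst1 N (lamN n (.var j)) = lamN n (.var j) from by
    simp [subst1, subst_lamN, subst, upN_scons_lt N h]] at hb

theorem step_lamN_var_eq (n : ℕ) (N : Tm) :
    Step (.app (lamN (n + 1) (.var n)) N) (lamN n (rename (fun k => k + n) N)) := by
  have hb := Step.beta (lamN n (.var n)) N
  rwa [show subst1 N (lamN n (.var n)) = lamN n (rename (fun k => k + n) N) from by
    simp [subst1, subst_lamN, subst, upN_scons_eq]] at hb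

theorem step_lamN_shift (n : ℕ) (N A : Tm) :
    Step (.app (lamN (n + 1) (rename (fun k => k + (n + 1)) N)) A)
      (lamN n (rename (fun k => k + n) N)) := by
  have hb := Step.beta (lamN n (rename (fun k => k + (n + 1)) N)) A
  rwa [show subst1 A (lamN n (rename (fun k => k + (n + 1)) N))
      = lamN n (rename (fun k => k + n) N) from ?_] at hb
  simp only [subst1, subst_lamN, subst_rename]
  congr 1
  rw [show rename (fun k => k + n) N = subst (fun k => .var (k + n)) N from ?_]
  · apply subst_ext
    intro k
    rw [upN_scons_gt A (show n < k + (n + 1) by omega),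
      show k + (n + 1) - 1 = k + n from by omega]
  · exact rename_as_subst _ N

theorem appConst (l : List Tm) (N : Tm) :
    Steps (appList (lamN l.length (rename (fun k => k + l.length) N)) l) N := by
  induction l generalizing N with
  | nil =>
    show Steps (rename (fun k => k + 0) N) N
    rw [rename_ext (ξ := fun k => k + 0) (ζ := fun k => k) N (fun k => rfl), rename_id]
    exact Steps.refl _
  | cons A l ih =>
    show Steps (appList (.app (lamN (l.length + 1) (rename (fun k => k + (l.length + 1)) N)) A) l) N
    exact (Steps.appList l (Steps.single (step_lamN_shift l.length N A))).trans (ih N)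

theorem appPi (l : List Tm) (t : ℕ) (ht : t < l.length) :
    Steps (appList (lamN l.length (.var (l.length - 1 - t))) l) l[t] := by
  induction l generalizing t with
  | nil => simp at ht
  | cons A l ih =>
    cases t with
    | zero =>
      show Steps (appList (.app (lamN (l.length + 1) (.var (l.length + 1 - 1 - 0))) A) l) A
      simp only [Nat.add_sub_cancel, Nat.sub_zero]
      exact (Steps.appList l (Steps.single (step_lamN_var_eq l.length A))).trans
        (appConst l A)
    | succ t =>
      have ht' : t < l.length := by simpa using ht
      show Steps (appList (.app (lamN (l.length + 1) (.var (l.length + 1 - 1 - (t+1)))) A) l)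
        l[t]
      have : l.length + 1 - 1 - (t + 1) = l.length - 1 - t := by omega
      rw [this]
      refine (Steps.appList l (Steps.single (step_lamN_var_lt A ?_))).trans (ih t ht')
      omega

theorem caseRed (K t : ℕ) (f : ℕ → Tm) (ht : t ≤ K + 4) :
    Steps (caseOf K (piTm K t) f) (f t) := by
  have hlen : ((List.range (K + 5)).map f).length = K + 5 := by simp
  have h := appPi ((List.range (K + 5)).map f) t (by rw [hlen]; omega)
  simp only [List.getElem_map, List.getElem_range] at h
  rw [hlen] at h
  have hpi : piTm K t = lamN (K + 5) (.var (K + 5 - 1 - t)) := by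
    simp only [piTm, sv, show K + 5 - 1 - t = K + 4 - t from by omega]
  rw [caseOf, hpi]
  exact h
/-! ### caseOf and concrete combinator computations -/

theorem subst_caseOf (σ : ℕ → Tm) (K : ℕ) (x : Tm) (f : ℕ → Tm) :
    subst σ (caseOf K x f) = caseOf K (subst σ x) (fun j => subst σ (f j)) := by
  simp only [caseOf, subst_appList, List.map_map]
  rfl

theorem bdd_mono {n n' : ℕ} {M : Tm} (h : Bdd n M) (hn : n ≤ n') : Bdd n' M := by
  induction M generalizing n n' with
  | var k => exact Nat.lt_of_lt_of_le h hn
  | app s t ihs iht => exact ⟨ihs h.1 hn, iht h.2 hn⟩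
  | lam s ih => exact ih h (by omega)

theorem bdd_caseOf {n K : ℕ} {x : Tm} {f : ℕ → Tm} (hx : Bdd n x) (hf : ∀ j, Bdd n (f j)) :
    Bdd n (caseOf K x f) := by
  apply bdd_appList hx
  intro A hA
  obtain ⟨j, _, rfl⟩ := List.mem_map.mp hA
  exact hf j

theorem bdd_deltaTm (K t : ℕ) : Bdd 0 (deltaTm K t) := by
  show Bdd 1 (lamN (K + 5) _)
  apply bdd_lamN
  apply bdd_caseOf
  · show K + 5 < 1 + (K + 5); omega
  · intro j
    split <;> · show K + 4 - _ < 1 + (K + 5); omega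

theorem subst_sv {σ : ℕ → Tm} {K : ℕ} (i : ℕ) (h : ∀ k < K + 5, σ k = .var k) :
    subst σ (sv K i) = sv K i :=
  bdd_subst (show K + 4 - i < K + 5 by omega) h

theorem deltaRed (K t : ℕ) : Steps (.app (deltaTm K t) (piTm K (K + 3))) (piTm K t) := by
  have hb := Step.beta (lamN (K + 5) (caseOf K (.var (K + 5))
    (fun j => if j = K + 3 then sv K t else sv K (K + 4)))) (piTm K (K + 3))
  have key : subst1 (piTm K (K + 3)) (lamN (K + 5) (caseOf K (.var (K + 5))
      (fun j => if j = K + 3 then sv K t else sv K (K + 4))))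
      = lamN (K + 5) (caseOf K (piTm K (K + 3))
        (fun j => if j = K + 3 then sv K t else sv K (K + 4))) := by
    rw [subst1, subst_lamN, subst_caseOf]
    congr 1
    have hhead : subst (upN (K + 5) (scons (piTm K (K + 3)) Tm.var)) (.var (K + 5))
        = piTm K (K + 3) := by
      show upN (K + 5) (scons (piTm K (K + 3)) Tm.var) (K + 5) = piTm K (K + 3)
      rw [upN_scons_eq, rename_piTm]
    rw [hhead]
    congr 1
    funext j
    split
    · exact subst_sv t (fun k hk => upN_scons_lt _ hk)
    · exact subst_sv (K + 4) (fun k hk => upN_scons_lt _ hk)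
  rw [key] at hb
  refine (Steps.single hb).trans ?_
  have hc := caseRed K (K + 3) (fun j => if j = K + 3 then sv K t else sv K (K + 4))
    (by omega)
  simp only [if_pos rfl] at hc
  exact Steps.lamN (K + 5) hc

/-- Branch function of `Grule`. -/
def gbr (K : ℕ) (R : SRule) (x : Tm) : ℕ → Tm := fun j =>
  if j = K + 2 then caseOf K x (fun j1 => sv K j1)
  else if j = 0 then caseOf K x (fun j1 => if j1 = R.2.2 then sv K R.1.2 else sv K (K + 4))
  else if j = 1 then caseOf K x (fun j1 => if j1 = R.2.1 then sv K R.1.1 else sv K (K + 4))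
  else sv K (K + 4)

theorem grule_eq (K : ℕ) (R : SRule) :
    Grule K R = .lam (.lam (lamN (K + 5) (caseOf K (.app (.var (K + 6)) (piTm K (K + 3)))
      (gbr K R (.var (K + 5)))))) := rfl

theorem bdd_gbr (K : ℕ) (R : SRule) (j : ℕ) : Bdd (K + 6) (gbr K R (.var (K + 5)) j) := by
  unfold gbr
  have hsv : ∀ i, Bdd (K + 6) (sv K i) := fun i => show K + 4 - i < K + 6 by omega
  have hx : Bdd (K + 6) (Tm.var (K + 5)) := by show K + 5 < K + 6; omega
  split
  · exact bdd_caseOf hx (fun j1 => hsv j1)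
  · split
    · exact bdd_caseOf hx (fun j1 => by split <;> apply hsv)
    · split
      · exact bdd_caseOf hx (fun j1 => by split <;> apply hsv)
      · exact hsv _

/-- The value computed by `Grule` from head value `th` and argument value `u`. -/
def gv (K : ℕ) (R : SRule) (th u : ℕ) : ℕ :=
  if th = K + 2 then u
  else if th = 0 then (if u = R.2.2 then R.1.2 else K + 4)
  else if th = 1 then (if u = R.2.1 then R.1.1 else K + 4)
  else K + 4

theorem subst_gbr (K : ℕ) (R : SRule) (u : ℕ) (j : ℕ) :
    subst (upN (K + 5) (scons (piTm K u) Tm.var)) (gbr K R (.var (K + 5)) j)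
      = gbr K R (piTm K u) j := by
  have hx : subst (upN (K + 5) (scons (piTm K u) Tm.var)) (.var (K + 5)) = piTm K u := by
    show upN (K + 5) (scons (piTm K u) Tm.var) (K + 5) = piTm K u
    rw [upN_scons_eq, rename_piTm]
  have hsv : ∀ i, subst (upN (K + 5) (scons (piTm K u) Tm.var)) (sv K i) = sv K i :=
    fun i => subst_sv i (fun k hk => upN_scons_lt _ hk)
  unfold gbr
  split
  · rw [subst_caseOf, hx]
    congr 1
    funext j1
    exact hsv j1
  · split
    · rw [subst_caseOf, hx]
      congr 1
      funext j1
      split <;> apply hsv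
    · split
      · rw [subst_caseOf, hx]
        congr 1
        funext j1
        split <;> apply hsv
      · exact hsv _

theorem gruleRed (K : ℕ) (R : SRule) (H X : Tm) (th u : ℕ)
    (hH : Bdd 0 H) (hth : Steps (.app H (piTm K (K + 3))) (piTm K th)) (hthle : th ≤ K + 4)
    (hX : Steps X (piTm K u)) (hu : u ≤ K + 4) :
    Steps (.app (.app (Grule K R) H) X) (piTm K (gv K R th u)) := by
  -- first reduce the argument
  refine (Steps.appR _ hX).trans ?_
  -- β-reduce the first abstraction
  have hb1 := Step.beta (.lam (lamN (K + 5) (caseOf K (.app (.var (K + 6)) (piTm K (K + 3)))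
    (gbr K R (.var (K + 5)))))) H
  have key1 : subst1 H (.lam (lamN (K + 5) (caseOf K (.app (.var (K + 6)) (piTm K (K + 3)))
      (gbr K R (.var (K + 5))))))
      = .lam (lamN (K + 5) (caseOf K (.app H (piTm K (K + 3))) (gbr K R (.var (K + 5))))) := by
    show subst (scons H Tm.var) (lamN (K + 6) (caseOf K (.app (.var (K + 6)) (piTm K (K + 3)))
      (gbr K R (.var (K + 5)))))
      = lamN (K + 6) (caseOf K (.app H (piTm K (K + 3))) (gbr K R (.var (K + 5))))
    rw [subst_lamN, subst_caseOf]
    congr 1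
    have hhead : subst (upN (K + 6) (scons H Tm.var)) (.app (.var (K + 6)) (piTm K (K + 3)))
        = .app H (piTm K (K + 3)) := by
      rw [show subst (upN (K + 6) (scons H Tm.var)) (Tm.app (.var (K + 6)) (piTm K (K + 3)))
          = Tm.app (upN (K + 6) (scons H Tm.var) (K + 6))
            (subst (upN (K + 6) (scons H Tm.var)) (piTm K (K + 3))) from rfl,
        subst_piTm, upN_scons_eq, bdd_rename hH (by omega)]
    rw [hhead]
    congr 1
    funext j
    exact bdd_subst (bdd_gbr K R j) (fun k hk => upN_scons_lt _ hk)
  rw [key1] at hb1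
  rw [grule_eq]
  refine (Steps.appL _ (Steps.single hb1)).trans ?_
  -- β-reduce the second abstraction
  have hb2 := Step.beta (lamN (K + 5) (caseOf K (.app H (piTm K (K + 3)))
    (gbr K R (.var (K + 5))))) (piTm K u)
  have key2 : subst1 (piTm K u) (lamN (K + 5) (caseOf K (.app H (piTm K (K + 3)))
      (gbr K R (.var (K + 5)))))
      = lamN (K + 5) (caseOf K (.app H (piTm K (K + 3))) (gbr K R (piTm K u))) := by
    rw [subst1, subst_lamN, subst_caseOf]
    congr 1
    have hhead : subst (upN (K + 5) (scons (piTm K u) Tm.var)) (.app H (piTm K (K + 3)))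
        = .app H (piTm K (K + 3)) := by
      rw [show subst (upN (K + 5) (scons (piTm K u) Tm.var)) (Tm.app H (piTm K (K + 3)))
          = Tm.app (subst (upN (K + 5) (scons (piTm K u) Tm.var)) H)
            (subst (upN (K + 5) (scons (piTm K u) Tm.var)) (piTm K (K + 3))) from rfl,
        subst_piTm, bdd_subst hH (by omega)]
    rw [hhead]
    congr 1
    funext j
    exact subst_gbr K R u j
  rw [key2] at hb2
  refine (Steps.single hb2).trans ?_
  -- reduce inside the λ-abstractions
  apply Steps.lamN
  have s1 : Steps (caseOf K (.app H (piTm K (K + 3))) (gbr K R (piTm K u)))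
      (caseOf K (piTm K th) (gbr K R (piTm K u))) := Steps.appList _ hth
  refine s1.trans ?_
  refine (caseRed K th _ hthle).trans ?_
  -- compute the branch
  unfold gbr gv
  by_cases h2 : th = K + 2
  · simp only [if_pos h2, h2]
    exact caseRed K u _ hu
  · simp only [if_neg h2]
    by_cases h0 : th = 0
    · simp only [if_pos h0, h0]
      refine (caseRed K u _ hu).trans ?_
      split <;> exact Steps.refl _
    · simp only [if_neg h0]
      by_cases h1 : th = 1
      · simp only [if_pos h1, h1]
        refine (caseRed K u _ hu).trans ?_
        split <;> exact Steps.refl _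
      · simp only [if_neg h1]
        exact Steps.refl _
/-! ### The substitution SG on the relevant variables -/

theorem SG_z1 (K : ℕ) (Rs : List SRule) (m : ℕ) (P : ℕ → Tm) :
    SG K Rs m P (m + 1) = piTm K 1 := by
  simp only [SG, mkSub]
  split_ifs <;> first | rfl | (exfalso; omega)

theorem SG_r (K : ℕ) (Rs : List SRule) (m : ℕ) (P : ℕ → Tm) (i0 : ℕ)
    (h1 : 1 ≤ i0) (h2 : i0 ≤ Rs.length) :
    SG K Rs m P (m + 3 + Rs.length - i0) = Grule K (Rs.getD (i0 - 1) ((0, 0), (0, 0))) := by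
  simp only [SG, mkSub]
  split_ifs <;>
    first
      | (exfalso; omega)
      | rw [show m + 3 + Rs.length - (m + 3 + Rs.length - i0) = i0 from by omega]

theorem SG_p (K : ℕ) (Rs : List SRule) (m : ℕ) (P : ℕ → Tm) (j : ℕ)
    (h1 : 1 ≤ j) (h2 : j ≤ m) : SG K Rs m P (m - j) = P j := by
  simp only [SG, mkSub]
  split_ifs <;>
    first
      | (exfalso; omega)
      | rw [show m - (m - j) = j from by omega]

/-- The head value of `G_j^i`. -/
def gji (K i j : ℕ) : ℕ := if i = j then 1 else if i = j + 1 then 0 else K + 2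

theorem Gji_eq (K i j : ℕ) : Gji K i j = deltaTm K (gji K i j) := by
  unfold Gji gji
  split_ifs <;> rfl

theorem gji_le (K i j : ℕ) : gji K i j ≤ K + 4 := by
  unfold gji; split_ifs <;> omega

theorem gv_le (K : ℕ) (R : SRule) (th u : ℕ) (h11 : R.1.1 ≤ K) (h12 : R.1.2 ≤ K)
    (hu : u ≤ K + 4) : gv K R th u ≤ K + 4 := by
  unfold gv; split_ifs <;> omega

theorem getD_mem (Rs : List SRule) (i0 : ℕ) (h1 : 1 ≤ i0) (h2 : i0 ≤ Rs.length) :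
    Rs.getD (i0 - 1) ((0, 0), (0, 0)) ∈ Rs := by
  have hlt : i0 - 1 < Rs.length := by omega
  rw [List.getD_eq_getElem?_getD, List.getElem?_eq_getElem hlt]
  exact List.getElem_mem hlt

/-! ### Reduction of substituted Q-terms -/

theorem subst_rule_red (K : ℕ) (Rs : List SRule) (m i i0 j : ℕ) (M : Tm)
    (h1 : 1 ≤ i0) (h2 : i0 ≤ Rs.length) (h3 : 1 ≤ j) (h4 : j ≤ m) (u : ℕ)
    (hstep : Steps (subst (SG K Rs m (fun j' => Gji K i j')) M) (piTm K u)) (hu : u ≤ K + 4) :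
    Steps (subst (SG K Rs m (fun j' => Gji K i j'))
        (.app (.app (.var (m + 3 + Rs.length - i0)) (.var (m - j))) M))
      (piTm K (gv K (Rs.getD (i0 - 1) ((0, 0), (0, 0))) (gji K i j) u)) := by
  set σ := SG K Rs m (fun j' => Gji K i j') with hσ
  rw [show subst σ (.app (.app (.var (m + 3 + Rs.length - i0)) (.var (m - j))) M)
    = .app (.app (σ (m + 3 + Rs.length - i0)) (σ (m - j))) (subst σ M) from rfl]
  rw [hσ, SG_r K Rs m _ i0 h1 h2, SG_p K Rs m _ j h3 h4, Gji_eq]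
  exact gruleRed K _ _ _ (gji K i j) u (bdd_deltaTm _ _) (deltaRed _ _) (gji_le K i j)
    hstep hu

theorem subst_ruleEta_red (K : ℕ) (Rs : List SRule) (m i i0 j : ℕ) (M : Tm)
    (h1 : 1 ≤ i0) (h2 : i0 ≤ Rs.length) (h3 : 1 ≤ j) (h4 : j ≤ m) (u : ℕ)
    (hstep : Steps (subst (SG K Rs m (fun j' => Gji K i j')) M) (piTm K u)) (hu : u ≤ K + 4) :
    Steps (subst (SG K Rs m (fun j' => Gji K i j'))
        (.app (.app (.var (m + 3 + Rs.length - i0)) (.lam (.app (.var (m - j + 1)) (.var 0)))) M))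
      (piTm K (gv K (Rs.getD (i0 - 1) ((0, 0), (0, 0))) (gji K i j) u)) := by
  set σ := SG K Rs m (fun j' => Gji K i j') with hσ
  rw [show subst σ (.app (.app (.var (m + 3 + Rs.length - i0))
        (.lam (.app (.var (m - j + 1)) (.var 0)))) M)
    = .app (.app (σ (m + 3 + Rs.length - i0))
        (.lam (.app (rename Nat.succ (σ (m - j))) (.var 0)))) (subst σ M) from rfl]
  rw [hσ, SG_r K Rs m _ i0 h1 h2, SG_p K Rs m _ j h3 h4, Gji_eq,
    bdd_rename (bdd_deltaTm K (gji K i j)) (by omega)]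
  refine gruleRed K _ _ _ (gji K i j) u ?_ ?_ (gji_le K i j) hstep hu
  · exact ⟨bdd_mono (bdd_deltaTm K (gji K i j)) (by omega), by show 0 < 1; omega⟩
  · have hb := Step.beta (.app (deltaTm K (gji K i j)) (.var 0)) (piTm K (K + 3))
    have key : subst1 (piTm K (K + 3)) (.app (deltaTm K (gji K i j)) (.var 0))
        = .app (deltaTm K (gji K i j)) (piTm K (K + 3)) := by
      rw [show subst1 (piTm K (K + 3)) (.app (deltaTm K (gji K i j)) (.var 0))
        = .app (subst (scons (piTm K (K + 3)) Tm.var) (deltaTm K (gji K i j)))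
          (piTm K (K + 3)) from rfl]
      rw [bdd_subst (bdd_deltaTm K (gji K i j)) (by omega)]
    rw [key] at hb
    exact (Steps.single hb).trans (deltaRed K (gji K i j))

theorem qRed (K : ℕ) (Rs : List SRule)
    (hsym : ∀ r ∈ Rs, r.1.1 ≤ K ∧ r.1.2 ≤ K ∧ r.2.1 ≤ K ∧ r.2.2 ≤ K)
    {m : ℕ} {M : Tm} (hQ : Qset Rs.length m M) (i : ℕ) :
    ∃ v, v ≤ K + 4 ∧ Steps (subst (SG K Rs m (fun j => Gji K i j)) M) (piTm K v) := by
  induction hQ with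
  | z1 =>
    refine ⟨1, by omega, ?_⟩
    rw [show subst (SG K Rs m (fun j => Gji K i j)) (.var (m + 1))
      = SG K Rs m (fun j => Gji K i j) (m + 1) from rfl, SG_z1]
    exact Steps.refl _
  | rule i0 j M h1 h2 h3 h4 hQ' ih =>
    obtain ⟨u, hu, hsteps⟩ := ih
    obtain ⟨hb1, hb2, -, -⟩ := hsym _ (getD_mem Rs i0 h1 h2)
    exact ⟨_, gv_le K _ (gji K i j) u hb1 hb2 hu,
      subst_rule_red K Rs m i i0 j M h1 h2 h3 h4 u hsteps hu⟩
  | ruleEta i0 j M h1 h2 h3 h4 hQ' ih =>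
    obtain ⟨u, hu, hsteps⟩ := ih
    obtain ⟨hb1, hb2, -, -⟩ := hsym _ (getD_mem Rs i0 h1 h2)
    exact ⟨_, gv_le K _ (gji K i j) u hb1 hb2 hu,
      subst_ruleEta_red K Rs m i i0 j M h1 h2 h3 h4 u hsteps hu⟩

theorem gv_K2 (K : ℕ) (R : SRule) (u : ℕ) : gv K R (K + 2) u = u := by
  unfold gv; rw [if_pos rfl]

theorem gv_one (K : ℕ) (R : SRule) (u : ℕ) :
    gv K R 1 u = if u = R.2.1 then R.1.1 else K + 4 := by
  unfold gv
  rw [if_neg (show (1 : ℕ) ≠ K + 2 by omega), if_neg (show (1 : ℕ) ≠ 0 by omega), if_pos rfl]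

theorem gv_zero (K : ℕ) (R : SRule) (u : ℕ) :
    gv K R 0 u = if u = R.2.2 then R.1.2 else K + 4 := by
  unfold gv
  rw [if_neg (show (0 : ℕ) ≠ K + 2 by omega), if_pos rfl]
/-! ### List splitting -/

theorem map_range_split (g : ℕ → ℕ) (p q : ℕ) :
    (List.range (p + 2 + q)).map g
      = (List.range p).map g ++ g p :: g (p + 1)
          :: (List.range q).map (fun k => g (k + p + 2)) := by
  rw [show p + 2 + q = p + (2 + q) from by omega, List.range_add, List.map_append,
    List.map_map]
  congr 1
  rw [List.range_add, List.map_append, List.map_map]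
  rw [show List.range 2 = [0, 1] from rfl]
  simp only [List.map_cons, List.map_nil, Function.comp]
  rw [show p + 0 = p from rfl]
  simp only [List.cons_append, List.nil_append]
  congr 1
  congr 1
  apply List.map_congr_left
  intro k _
  show g (p + (2 + k)) = g (k + p + 2)
  exact congrArg g (by omega)
/-- Lemma (Q semantics): for `m > 0`, letters `a_1, …, a_{m+1} ∈ {0,…,K}`, and `M ∈ Q_m`:
if `Γ_m ⊢ M : κ`, `S_G(M)[p_1 := G_1^0, …, p_m := G_m^0] =β π_1`, and
`S_G(M)[p_1 := G_1^i, …, p_m := G_m^i] =β π_{a_i}` for `i ∈ {1,…,m+1}`,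
then `a_1 … a_{m+1} ⇒* 1^{m+1}`. -/
theorem Q_ssts_sem (K : ℕ) (hK : 1 ≤ K) (Rs : List SRule) (hL : Rs ≠ [])
    (hsym : ∀ r ∈ Rs, r.1.1 ≤ K ∧ r.1.2 ≤ K ∧ r.2.1 ≤ K ∧ r.2.2 ≤ K)
    (m : ℕ) (hm : 0 < m) (a : ℕ → ℕ) (ha : ∀ i, 1 ≤ i → i ≤ m + 1 → a i ≤ K)
    (M : Tm) (hQ : Qset Rs.length m M)
    (hty : Stlc (GammaEnv Rs.length K m) M (tyK K))
    (h0 : Conv (subst (SG K Rs m (fun j => Gji K 0 j)) M) (piTm K 1))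
    (hi : ∀ i, 1 ≤ i → i ≤ m + 1 →
      Conv (subst (SG K Rs m (fun j => Gji K i j)) M) (piTm K (a i))) :
    SRew Rs ((List.range (m + 1)).map (fun k => a (k + 1))) (List.replicate (m + 1) 1) := by
  clear hty hL
  revert ha h0 hi
  induction hQ generalizing a with
  | z1 =>
    intro ha h0 hi
    have key : ∀ i, 1 ≤ i → i ≤ m + 1 → a i = 1 := by
      intro i hi1 hi2
      have hred : Steps (subst (SG K Rs m (fun j => Gji K i j)) (.var (m + 1))) (piTm K 1) := by
        rw [show subst (SG K Rs m (fun j => Gji K i j)) (.var (m + 1))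
          = SG K Rs m (fun j => Gji K i j) (m + 1) from rfl, SG_z1]
        exact Steps.refl _
      have := conv_pi_unique (hi i hi1 hi2) hred (by have := ha i hi1 hi2; omega) (by omega)
      omega
    rw [show (List.range (m + 1)).map (fun k => a (k + 1)) = List.replicate (m + 1) 1 from ?_]
    · exact Relation.ReflTransGen.refl
    · apply List.ext_getElem (by simp)
      intro n hn1 hn2
      simp only [List.getElem_map, List.getElem_range, List.getElem_replicate]
      have hlt : n < m + 1 := by simpa using hn1
      exact key (n + 1) (by omega) (by omega)
  | rule i0 j M h1 h2 h3 h4 hQ' ih =>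
    intro ha h0 hi
    have hRmem : Rs.getD (i0 - 1) ((0, 0), (0, 0)) ∈ Rs := getD_mem Rs i0 h1 h2
    set R := Rs.getD (i0 - 1) ((0, 0), (0, 0)) with hRdef
    obtain ⟨hA, hB, hC, hD⟩ := hsym R hRmem
    choose u hu hured using fun i => qRed K Rs hsym hQ' i
    have hredM : ∀ i, Steps (subst (SG K Rs m (fun j' => Gji K i j'))
        (.app (.app (.var (m + 3 + Rs.length - i0)) (.var (m - j))) M))
        (piTm K (gv K R (gji K i j) (u i))) :=
      fun i => subst_rule_red K Rs m i i0 j M h1 h2 h3 h4 (u i) (hured i) (hu i)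
    have hval : ∀ i, 1 ≤ i → i ≤ m + 1 → gv K R (gji K i j) (u i) = a i := by
      intro i hi1 hi2
      exact conv_pi_unique (hi i hi1 hi2) (hredM i) (by have := ha i hi1 hi2; omega)
        (gv_le K R _ _ hA hB (hu i))
    have hval0 : gv K R (gji K 0 j) (u 0) = 1 :=
      conv_pi_unique h0 (hredM 0) (by omega) (gv_le K R _ _ hA hB (hu 0))
    have hu0 : u 0 = 1 := by
      have hg : gji K 0 j = K + 2 := by unfold gji; rw [if_neg (by omega), if_neg (by omega)]
      rw [hg, gv_K2] at hval0
      exact hval0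
    have hvj := hval j h3 (by omega)
    rw [show gji K j j = 1 from by unfold gji; rw [if_pos rfl]] at hvj
    have haj : a j ≤ K := ha j h3 (by omega)
    have hvj' : (if u j = R.2.1 then R.1.1 else K + 4) = a j := by
      rwa [gv_one] at hvj
    have huj : u j = R.2.1 ∧ a j = R.1.1 := by
      by_cases h : u j = R.2.1
      · rw [if_pos h] at hvj'; exact ⟨h, hvj'.symm⟩
      · rw [if_neg h] at hvj'; omega
    have hvj1 := hval (j + 1) (by omega) (by omega)
    rw [show gji K (j + 1) j = 0 from by
      unfold gji; rw [if_neg (by omega), if_pos rfl]] at hvj1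
    have haj1 : a (j + 1) ≤ K := ha (j + 1) (by omega) (by omega)
    have hvj1' : (if u (j + 1) = R.2.2 then R.1.2 else K + 4) = a (j + 1) := by
      rwa [gv_zero] at hvj1
    have huj1 : u (j + 1) = R.2.2 ∧ a (j + 1) = R.1.2 := by
      by_cases h : u (j + 1) = R.2.2
      · rw [if_pos h] at hvj1'; exact ⟨h, hvj1'.symm⟩
      · rw [if_neg h] at hvj1'; omega
    have hother : ∀ i, i ≠ j → i ≠ j + 1 → gv K R (gji K i j) (u i) = u i := by
      intro i hij hij1
      rw [show gji K i j = K + 2 from by unfold gji; rw [if_neg hij, if_neg hij1], gv_K2]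
    set a' : ℕ → ℕ := fun i => if i = j then R.2.1 else if i = j + 1 then R.2.2 else a i
      with ha'def
    have ihres := ih a' ?ha' ?h0' ?hi'
    case ha' =>
      intro i hi1 hi2
      simp only [ha'def]
      split_ifs
      · exact hC
      · exact hD
      · exact ha i hi1 hi2
    case h0' =>
      have h' := hured 0
      rw [hu0] at h'
      exact h'.conv
    case hi' =>
      intro i hi1 hi2
      have h' := hured i
      have heq : u i = a' i := by
        simp only [ha'def]
        split_ifs with e1 e2
        · rw [e1]; exact huj.1
        · rw [e2]; exact huj1.1
        · have hg := hother i e1 e2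
          have hv := hval i hi1 hi2
          omega
      rw [heq] at h'
      exact h'.conv
    refine Relation.ReflTransGen.head ?_ ihres
    refine ⟨(List.range (j - 1)).map (fun k => a (k + 1)),
      (List.range (m - j)).map (fun k => a (k + (j - 1) + 2 + 1)),
      R.1.1, R.1.2, R.2.1, R.2.2, hRmem, ?_, ?_⟩
    · have hsplit := map_range_split (fun k => a (k + 1)) (j - 1) (m - j)
      rw [show j - 1 + 2 + (m - j) = m + 1 from by omega,
        show j - 1 + 1 = j from by omega] at hsplit
      rw [huj.2, huj1.2] at hsplit
      exact hsplit
    · have hsplit := map_range_split (fun k => a' (k + 1)) (j - 1) (m - j)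
      rw [show j - 1 + 2 + (m - j) = m + 1 from by omega,
        show j - 1 + 1 = j from by omega] at hsplit
      have hm1 : a' j = R.2.1 := by simp [ha'def]
      have hm2 : a' (j + 1) = R.2.2 := by
        simp only [ha'def]
        rw [if_neg (by omega)]
        simp
      rw [hm1, hm2] at hsplit
      rw [hsplit]
      congr 1
      · apply List.map_congr_left
        intro k hk
        have hk' : k < j - 1 := List.mem_range.mp hk
        simp only [ha'def]
        rw [if_neg (by omega), if_neg (by omega)]
      · congr 1
        congr 1
        apply List.map_congr_left
        intro k _
        simp only [ha'def]
        rw [if_neg (by omega), if_neg (by omega)]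
  | ruleEta i0 j M h1 h2 h3 h4 hQ' ih =>
    intro ha h0 hi
    have hRmem : Rs.getD (i0 - 1) ((0, 0), (0, 0)) ∈ Rs := getD_mem Rs i0 h1 h2
    set R := Rs.getD (i0 - 1) ((0, 0), (0, 0)) with hRdef
    obtain ⟨hA, hB, hC, hD⟩ := hsym R hRmem
    choose u hu hured using fun i => qRed K Rs hsym hQ' i
    have hredM : ∀ i, Steps (subst (SG K Rs m (fun j' => Gji K i j'))
        (.app (.app (.var (m + 3 + Rs.length - i0))
          (.lam (.app (.var (m - j + 1)) (.var 0)))) M))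
        (piTm K (gv K R (gji K i j) (u i))) :=
      fun i => subst_ruleEta_red K Rs m i i0 j M h1 h2 h3 h4 (u i) (hured i) (hu i)
    have hval : ∀ i, 1 ≤ i → i ≤ m + 1 → gv K R (gji K i j) (u i) = a i := by
      intro i hi1 hi2
      exact conv_pi_unique (hi i hi1 hi2) (hredM i) (by have := ha i hi1 hi2; omega)
        (gv_le K R _ _ hA hB (hu i))
    have hval0 : gv K R (gji K 0 j) (u 0) = 1 :=
      conv_pi_unique h0 (hredM 0) (by omega) (gv_le K R _ _ hA hB (hu 0))
    have hu0 : u 0 = 1 := by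
      have hg : gji K 0 j = K + 2 := by unfold gji; rw [if_neg (by omega), if_neg (by omega)]
      rw [hg, gv_K2] at hval0
      exact hval0
    have hvj := hval j h3 (by omega)
    rw [show gji K j j = 1 from by unfold gji; rw [if_pos rfl]] at hvj
    have haj : a j ≤ K := ha j h3 (by omega)
    have hvj' : (if u j = R.2.1 then R.1.1 else K + 4) = a j := by
      rwa [gv_one] at hvj
    have huj : u j = R.2.1 ∧ a j = R.1.1 := by
      by_cases h : u j = R.2.1
      · rw [if_pos h] at hvj'; exact ⟨h, hvj'.symm⟩
      · rw [if_neg h] at hvj'; omega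
    have hvj1 := hval (j + 1) (by omega) (by omega)
    rw [show gji K (j + 1) j = 0 from by
      unfold gji; rw [if_neg (by omega), if_pos rfl]] at hvj1
    have haj1 : a (j + 1) ≤ K := ha (j + 1) (by omega) (by omega)
    have hvj1' : (if u (j + 1) = R.2.2 then R.1.2 else K + 4) = a (j + 1) := by
      rwa [gv_zero] at hvj1
    have huj1 : u (j + 1) = R.2.2 ∧ a (j + 1) = R.1.2 := by
      by_cases h : u (j + 1) = R.2.2
      · rw [if_pos h] at hvj1'; exact ⟨h, hvj1'.symm⟩
      · rw [if_neg h] at hvj1'; omega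
    have hother : ∀ i, i ≠ j → i ≠ j + 1 → gv K R (gji K i j) (u i) = u i := by
      intro i hij hij1
      rw [show gji K i j = K + 2 from by unfold gji; rw [if_neg hij, if_neg hij1], gv_K2]
    set a' : ℕ → ℕ := fun i => if i = j then R.2.1 else if i = j + 1 then R.2.2 else a i
      with ha'def
    have ihres := ih a' ?ha' ?h0' ?hi'
    case ha' =>
      intro i hi1 hi2
      simp only [ha'def]
      split_ifs
      · exact hC
      · exact hD
      · exact ha i hi1 hi2
    case h0' =>
      have h' := hured 0
      rw [hu0] at h'
      exact h'.conv
    case hi' =>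
      intro i hi1 hi2
      have h' := hured i
      have heq : u i = a' i := by
        simp only [ha'def]
        split_ifs with e1 e2
        · rw [e1]; exact huj.1
        · rw [e2]; exact huj1.1
        · have hg := hother i e1 e2
          have hv := hval i hi1 hi2
          omega
      rw [heq] at h'
      exact h'.conv
    refine Relation.ReflTransGen.head ?_ ihres
    refine ⟨(List.range (j - 1)).map (fun k => a (k + 1)),
      (List.range (m - j)).map (fun k => a (k + (j - 1) + 2 + 1)),
      R.1.1, R.1.2, R.2.1, R.2.2, hRmem, ?_, ?_⟩
    · have hsplit := map_range_split (fun k => a (k + 1)) (j - 1) (m - j)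
      rw [show j - 1 + 2 + (m - j) = m + 1 from by omega,
        show j - 1 + 1 = j from by omega] at hsplit
      rw [huj.2, huj1.2] at hsplit
      exact hsplit
    · have hsplit := map_range_split (fun k => a' (k + 1)) (j - 1) (m - j)
      rw [show j - 1 + 2 + (m - j) = m + 1 from by omega,
        show j - 1 + 1 = j from by omega] at hsplit
      have hm1 : a' j = R.2.1 := by simp [ha'def]
      have hm2 : a' (j + 1) = R.2.2 := by
        simp only [ha'def]
        rw [if_neg (by omega)]
        simp
      rw [hm1, hm2] at hsplit
      rw [hsplit]
      congr 1
      · apply List.map_congr_left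
        intro k hk
        have hk' : k < j - 1 := List.mem_range.mp hk
        simp only [ha'def]
        rw [if_neg (by omega), if_neg (by omega)]
      · congr 1
        congr 1
        apply List.map_congr_left
        intro k _
        simp only [ha'def]
        rw [if_neg (by omega), if_neg (by omega)]
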